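/- For all integers l ≥ 4 and k ≥ 0, the real polynomial H^{(l)}_k has a real root strictly less than −2, a real root strictly between l−1 and l, and a real root strictly greater than l+1. -/
import Mathlib


/-- `PU n` is the real polynomial with `PU 0 = 0`, `PU 1 = 1` and the Chebyshev recursion
`PU (n+1) = X * PU n - PU (n-1)`; equivalently `PU n x = U (n-1) (x/2)` where `U` is
Mathlib's integer-indexed Chebyshev polynomial of the second kind. -/
noncomputable def PU (n : ℤ) : Polynomial ℝ :=
  (Polynomial.Chebyshev.U ℝ (n - 1)).comp (Polynomial.C (1 / 2) * Polynomial.X)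

/-- `Hpoly l k`, the paper's closed formula for the hook-transpose series
`P^{(l+1,1)^T}_{l+4+k}`:
`PU (k+5) - 2(l-1) PU (k+4) + l(l-5) PU (k+3) + 3l(l-1) PU (k+2)
  + 2(l²-2l-1) PU (k+1) + l(l-1) PU k - (l+1) PU (k-1)`. -/
noncomputable def Hpoly (l : ℤ) (k : ℤ) : Polynomial ℝ :=
  PU (k + 5) - Polynomial.C (2 * ((l : ℝ) - 1)) * PU (k + 4)
    + Polynomial.C ((l : ℝ) * ((l : ℝ) - 5)) * PU (k + 3)
    + Polynomial.C (3 * (l : ℝ) * ((l : ℝ) - 1)) * PU (k + 2)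
    + Polynomial.C (2 * ((l : ℝ) ^ 2 - 2 * (l : ℝ) - 1)) * PU (k + 1)
    + Polynomial.C ((l : ℝ) * ((l : ℝ) - 1)) * PU k
    - Polynomial.C ((l : ℝ) + 1) * PU (k - 1)

lemma PU_rec (n : ℤ) : PU (n + 1) = Polynomial.X * PU n - PU (n - 1) := by
  unfold PU
  have h := Polynomial.Chebyshev.U_add_one ℝ (n - 1)
  rw [show n + 1 - 1 = (n - 1) + 1 from by ring, h]
  have h2 : (2 : Polynomial ℝ) * (Polynomial.C (1/2 : ℝ) * Polynomial.X) = Polynomial.X := by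
    rw [show ((2 : Polynomial ℝ)) = Polynomial.C 2 from (map_ofNat Polynomial.C 2).symm,
      ← mul_assoc, ← Polynomial.C_mul]
    norm_num
  simp only [Polynomial.sub_comp, Polynomial.mul_comp, Polynomial.X_comp, Polynomial.ofNat_comp]
  push_cast
  linear_combination ((Polynomial.Chebyshev.U ℝ (n - 1)).comp
    (Polynomial.C (1/2 : ℝ) * Polynomial.X)) * h2

lemma PU_zero : PU 0 = 0 := by
  unfold PU
  norm_num [Polynomial.Chebyshev.U_neg_one]

lemma PU_one : PU 1 = 1 := by
  unfold PU
  norm_num [Polynomial.Chebyshev.U_zero]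

lemma PU_neg_one : PU (-1) = -1 := by
  have h := PU_rec 0
  norm_num [PU_zero, PU_one] at h
  linear_combination h

lemma PU_two : PU 2 = Polynomial.X := by
  have h := PU_rec 1
  norm_num [PU_zero, PU_one] at h
  linear_combination h

lemma PU_three : PU 3 = Polynomial.X ^ 2 - 1 := by
  have h := PU_rec 2
  norm_num [PU_one, PU_two] at h
  linear_combination h

lemma PU_four : PU 4 = Polynomial.X ^ 3 - 2 * Polynomial.X := by
  have h := PU_rec 3
  norm_num [PU_two, PU_three] at h
  linear_combination h

lemma PU_five : PU 5 = Polynomial.X ^ 4 - 3 * Polynomial.X ^ 2 + 1 := by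
  have h := PU_rec 4
  norm_num [PU_three, PU_four] at h
  linear_combination h

lemma PU_six : PU 6 = Polynomial.X ^ 5 - 4 * Polynomial.X ^ 3 + 3 * Polynomial.X := by
  have h := PU_rec 5
  norm_num [PU_four, PU_five] at h
  linear_combination h

lemma Hpoly_rec (l k : ℤ) : Hpoly l (k + 1) = Polynomial.X * Hpoly l k - Hpoly l (k - 1) := by
  have h6 := PU_rec (k + 5); rw [show k+5+1 = k+6 from by ring, show k+5-1 = k+4 from by ring] at h6
  have h5 := PU_rec (k + 4); rw [show k+4+1 = k+5 from by ring, show k+4-1 = k+3 from by ring] at h5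
  have h4 := PU_rec (k + 3); rw [show k+3+1 = k+4 from by ring, show k+3-1 = k+2 from by ring] at h4
  have h3 := PU_rec (k + 2); rw [show k+2+1 = k+3 from by ring, show k+2-1 = k+1 from by ring] at h3
  have h2 := PU_rec (k + 1); rw [show k+1+1 = k+2 from by ring, show k+1-1 = k from by ring] at h2
  have h1 := PU_rec k
  have h0 := PU_rec (k - 1); rw [show k-1+1 = k from by ring, show k-1-1 = k-2 from by ring] at h0
  unfold Hpoly
  simp only [show k+1+5 = k+6 from by ring, show k+1+4 = k+5 from by ring,
    show k+1+3 = k+4 from by ring, show k+1+2 = k+3 from by ring,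
    show k+1+1 = k+2 from by ring, show k+1-1 = k from by ring,
    show k-1+5 = k+4 from by ring, show k-1+4 = k+3 from by ring,
    show k-1+3 = k+2 from by ring, show k-1+2 = k+1 from by ring,
    show k-1+1 = k from by ring, show k-1-1 = k-2 from by ring]
  linear_combination h6 - Polynomial.C (2 * ((l : ℝ) - 1)) * h5
    + Polynomial.C ((l : ℝ) * ((l : ℝ) - 5)) * h4
    + Polynomial.C (3 * (l : ℝ) * ((l : ℝ) - 1)) * h3
    + Polynomial.C (2 * ((l : ℝ) ^ 2 - 2 * (l : ℝ) - 1)) * h2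
    + Polynomial.C ((l : ℝ) * ((l : ℝ) - 1)) * h1
    - Polynomial.C ((l : ℝ) + 1) * h0

lemma eval_rec (l : ℤ) (x : ℝ) (n : ℤ) :
    (Hpoly l (n + 2)).eval x = x * (Hpoly l (n + 1)).eval x - (Hpoly l n).eval x := by
  have h := Hpoly_rec l (n + 1)
  rw [show n+1+1 = n+2 from by ring, show n+1-1 = n from by ring] at h
  rw [h]
  simp

lemma eval_H0 (l : ℤ) (x : ℝ) : (Hpoly l 0).eval x =
    x^4 + (2 - 2*(l:ℝ))*x^3 + ((l:ℝ)^2 - 5*l - 3)*x^2 + (3*(l:ℝ)^2 + l - 4)*x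
      + ((l:ℝ)^2 + 2*l) := by
  unfold Hpoly
  norm_num [PU_zero, PU_one, PU_neg_one, PU_two, PU_three, PU_four, PU_five]
  ring

lemma eval_H1 (l : ℤ) (x : ℝ) : (Hpoly l 1).eval x =
    x^5 + (2 - 2*(l:ℝ))*x^4 + ((l:ℝ)^2 - 5*l - 4)*x^3 + (3*(l:ℝ)^2 + 3*l - 6)*x^2
      + (6*(l:ℝ) + 1)*x + (2 - 2*(l:ℝ)^2) := by
  unfold Hpoly
  norm_num [PU_zero, PU_one, PU_two, PU_three, PU_four, PU_five, PU_six]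
  ring

/-- Monotone positive chain for sequences satisfying `a (k+2) = x * a (k+1) - a k` with `x ≥ 2`. -/
lemma chain (x : ℝ) (hx : 2 ≤ x) (a : ℕ → ℝ)
    (hrec : ∀ k : ℕ, a (k + 2) = x * a (k + 1) - a k)
    (h0 : 0 < a 0) (h1 : a 0 ≤ a 1) : ∀ k, 0 < a k := by
  have key : ∀ k, 0 < a k ∧ a k ≤ a (k + 1) := by
    intro k
    induction k with
    | zero => exact ⟨h0, h1⟩
    | succ n ih =>
      obtain ⟨hp, hm⟩ := ih
      have hp1 : 0 < a (n + 1) := lt_of_lt_of_le hp hm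
      refine ⟨hp1, ?_⟩
      rw [hrec n]
      nlinarith
  exact fun k => (key k).1

/-- for integers `l ≥ 4` and `k ≥ 0`, `Hpoly l k` has a real root `< -2`,
a real root strictly between `l-1` and `l`, and a real root `> l+1`. -/
theorem stmt16 (l : ℤ) (hl : 4 ≤ l) (k : ℕ) :
    (∃ x : ℝ, x < -2 ∧ (Hpoly l k).eval x = 0) ∧
      (∃ x : ℝ, (l : ℝ) - 1 < x ∧ x < (l : ℝ) ∧ (Hpoly l k).eval x = 0) ∧
      (∃ x : ℝ, (l : ℝ) + 1 < x ∧ (Hpoly l k).eval x = 0) := by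
  have hl' : (4 : ℝ) ≤ (l : ℝ) := by exact_mod_cast hl
  have hl0 : (0 : ℝ) < (l : ℝ) := by linarith
  have h4 : (0 : ℝ) ≤ (l : ℝ) - 4 := by linarith
  have hcont : ∀ m : ℕ, Continuous fun x : ℝ => (Hpoly l m).eval x :=
    fun m => (Hpoly l (m : ℤ)).continuous
  -- evaluation recursion over ℕ
  have hrecN : ∀ (x : ℝ) (n : ℕ), (Hpoly l ((n : ℤ) + 2)).eval x
      = x * (Hpoly l ((n : ℤ) + 1)).eval x - (Hpoly l (n : ℤ)).eval x :=
    fun x n => eval_rec l x n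
  -- sign at -(l+1):  (-1)^k * eval > 0
  have hA : ∀ n : ℕ, 0 < (-1 : ℝ)^n * (Hpoly l n).eval (-((l : ℝ) + 1)) := by
    apply chain ((l : ℝ) + 1) (by linarith)
    · intro n
      push_cast
      rw [hrecN (-((l : ℝ) + 1)) n]
      ring
    · norm_num [eval_H0]
      nlinarith [mul_nonneg h4 (le_of_lt (pow_pos hl0 3)),
        mul_nonneg h4 (le_of_lt (pow_pos hl0 2)), mul_nonneg h4 hl0.le,
        pow_pos hl0 2, pow_pos hl0 3, pow_pos hl0 4]
    · norm_num [eval_H0, eval_H1]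
      nlinarith [mul_nonneg h4 (le_of_lt (pow_pos hl0 4)),
        mul_nonneg h4 (le_of_lt (pow_pos hl0 3)),
        mul_nonneg h4 (le_of_lt (pow_pos hl0 2)), mul_nonneg h4 hl0.le,
        pow_pos hl0 2, pow_pos hl0 3, pow_pos hl0 4]
  -- sign at -2 :  (-1)^(k+1) * eval > 0
  have hB : ∀ n : ℕ, 0 < (-1 : ℝ)^(n+1) * (Hpoly l n).eval (-2) := by
    apply chain 2 le_rfl
    · intro n
      push_cast
      rw [hrecN (-2) n]
      ring
    · norm_num [eval_H0]
      nlinarith [pow_pos hl0 2]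
    · norm_num [eval_H0, eval_H1]
      nlinarith [pow_pos hl0 2]
  -- sign at l-1 : positive
  have hC : ∀ n : ℕ, 0 < (Hpoly l n).eval ((l : ℝ) - 1) := by
    apply chain ((l : ℝ) - 1) (by linarith)
    · intro n
      push_cast
      rw [hrecN ((l : ℝ) - 1) n]
    · norm_num [eval_H0]
      nlinarith
    · norm_num [eval_H0, eval_H1]
      nlinarith [mul_nonneg h4 hl0.le, pow_pos hl0 2, pow_pos hl0 3]
  -- sign at l : negative
  have hD : ∀ n : ℕ, 0 < -(Hpoly l n).eval (l : ℝ) := by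
    apply chain (l : ℝ) (by linarith)
    · intro n
      push_cast
      rw [hrecN (l : ℝ) n]
      ring
    · norm_num [eval_H0]
      nlinarith
    · norm_num [eval_H0, eval_H1]
      nlinarith [pow_pos hl0 2, pow_pos hl0 3]
  -- sign at l+1 : negative
  have hE : ∀ n : ℕ, 0 < -(Hpoly l n).eval ((l : ℝ) + 1) := by
    apply chain ((l : ℝ) + 1) (by linarith)
    · intro n
      push_cast
      rw [hrecN ((l : ℝ) + 1) n]
      ring
    · norm_num [eval_H0]
      nlinarith
    · norm_num [eval_H0, eval_H1]
      nlinarith [pow_pos hl0 2, pow_pos hl0 3]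
  -- sign at l+2 : positive
  have hF : ∀ n : ℕ, 0 < (Hpoly l n).eval ((l : ℝ) + 2) := by
    apply chain ((l : ℝ) + 2) (by linarith)
    · intro n
      push_cast
      rw [hrecN ((l : ℝ) + 2) n]
    · norm_num [eval_H0]
      nlinarith
    · norm_num [eval_H0, eval_H1]
      nlinarith [pow_pos hl0 2, pow_pos hl0 3]
  refine ⟨?_, ?_, ?_⟩
  · -- root < -2, between -(l+1) and -2
    have hab : -((l : ℝ) + 1) ≤ -2 := by linarith
    rcases Nat.even_or_odd k with he | ho
    · have h1 : 0 < (Hpoly l k).eval (-((l : ℝ) + 1)) := by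
        have := hA k; rwa [he.neg_one_pow, one_mul] at this
      have h2 : (Hpoly l k).eval (-2) < 0 := by
        have := hB k
        have hodd : Odd (k + 1) := Even.add_one he
        rw [hodd.neg_one_pow] at this; linarith
      obtain ⟨x, hx, hfx⟩ := intermediate_value_Ioo' hab ((hcont k).continuousOn)
        (Set.mem_Ioo.mpr ⟨h2, h1⟩)
      exact ⟨x, hx.2, hfx⟩
    · have h1 : (Hpoly l k).eval (-((l : ℝ) + 1)) < 0 := by
        have := hA k; rw [ho.neg_one_pow] at this; linarith
      have h2 : 0 < (Hpoly l k).eval (-2) := by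
        have := hB k
        have heven : Even (k + 1) := Odd.add_one ho
        rwa [heven.neg_one_pow, one_mul] at this
      obtain ⟨x, hx, hfx⟩ := intermediate_value_Ioo hab ((hcont k).continuousOn)
        (Set.mem_Ioo.mpr ⟨h1, h2⟩)
      exact ⟨x, hx.2, hfx⟩
  · -- root in (l-1, l)
    have hab : (l : ℝ) - 1 ≤ (l : ℝ) := by linarith
    have h1 := hC k
    have h2 : (Hpoly l k).eval (l : ℝ) < 0 := by have := hD k; linarith
    obtain ⟨x, hx, hfx⟩ := intermediate_value_Ioo' hab ((hcont k).continuousOn)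
      (Set.mem_Ioo.mpr ⟨h2, h1⟩)
    exact ⟨x, hx.1, hx.2, hfx⟩
  · -- root in (l+1, l+2)
    have hab : (l : ℝ) + 1 ≤ (l : ℝ) + 2 := by linarith
    have h1 : (Hpoly l k).eval ((l : ℝ) + 1) < 0 := by have := hE k; linarith
    have h2 := hF k
    obtain ⟨x, hx, hfx⟩ := intermediate_value_Ioo hab ((hcont k).continuousOn)
      (Set.mem_Ioo.mpr ⟨h1, h2⟩)
    exact ⟨x, hx.1, hfx⟩
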